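/- arXiv:quant-ph/0611273 — 2 statements merged into one kernel-verified Lean document; each statement's English description precedes it below -/
import Mathlib

section
/- For every α ∈ ℝ, every vector ψ ∈ ℂ², and every s ∈ {0,1}: X^s · (⟨b_s| ⊗ I₂) · CZ · (ψ ⊗ |+⟩) = (e^{iα/2}/√2) · J_α · ψ, where b_0 = |+_{-α}⟩ and b_1 = |-_{-α}⟩, and (⟨b| ⊗ I₂) denotes the partial inner product ℂ²⊗ℂ² → ℂ² that pairs the bra ⟨b| with the first tensor factor. That is, the one-way pattern 𝔍_α = X₂^{s₁} M₁^{-α} E₁₂ N₂^0 deterministically implements the unitary J_α = H·Z(α) on the input qubit, with the same output state (up to the fixed phase e^{iα/2}) for both measurement outcomes. -/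
noncomputable section

open Matrix
open scoped Kronecker

/-- Pauli X matrix. -/
def X : Matrix (Fin 2) (Fin 2) ℂ := !![0, 1; 1, 0]

/-- Pauli Z matrix. -/
def Z : Matrix (Fin 2) (Fin 2) ℂ := !![1, 0; 0, -1]

/-- Hadamard gate. -/
def H : Matrix (Fin 2) (Fin 2) ℂ := (Real.sqrt 2 : ℂ)⁻¹ • !![1, 1; 1, -1]

/-- Phase rotation `Z(α) = diag(e^{-iα/2}, e^{iα/2})`. -/
def Zrot (α : ℝ) : Matrix (Fin 2) (Fin 2) ℂ :=
  !![Complex.exp (-((α : ℂ) / 2) * Complex.I), 0;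
     0, Complex.exp (((α : ℂ) / 2) * Complex.I)]

/-- `|+_α⟩ = (|0⟩ + e^{iα}|1⟩)/√2` as a column vector. -/
def ketPlus (α : ℝ) : Matrix (Fin 2) (Fin 1) ℂ :=
  (Real.sqrt 2 : ℂ)⁻¹ • !![1; Complex.exp ((α : ℂ) * Complex.I)]

/-- `|-_α⟩ = (|0⟩ - e^{iα}|1⟩)/√2` as a column vector. -/
def ketMinus (α : ℝ) : Matrix (Fin 2) (Fin 1) ℂ :=
  (Real.sqrt 2 : ℂ)⁻¹ • !![1; -Complex.exp ((α : ℂ) * Complex.I)]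

/-- The controlled-Z gate `diag(1,1,1,-1)` on ℂ²⊗ℂ² (Kronecker ordering). -/
def CZ : Matrix (Fin 2 × Fin 2) (Fin 2 × Fin 2) ℂ :=
  Matrix.diagonal fun p => if p = (1, 1) then -1 else 1

/-- `X^s`: the identity if `s = 0`, Pauli `X` if `s = 1`. -/
def Xpow (s : Fin 2) : Matrix (Fin 2) (Fin 2) ℂ := if s = 0 then 1 else X

set_option maxHeartbeats 2000000 in
/-- The one-way pattern `𝔍_α = X₂^{s₁} M₁^{-α} E₁₂ N₂^0` deterministically
implements `J_α = H·Z(α)`: for every input `ψ`, every outcome `s ∈ {0,1}`,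
with `b₀ = |+_{-α}⟩`, `b₁ = |-_{-α}⟩`,
`X^s (⟨b_s| ⊗ I₂) CZ (ψ ⊗ |+⟩) = (e^{iα/2}/√2) J_α ψ`
(the output qubit carried by the second tensor factor). -/
theorem J_pattern (α : ℝ) (ψ : Matrix (Fin 2) (Fin 1) ℂ) (s : Fin 2) :
    ((1 : Matrix (Fin 1) (Fin 1) ℂ) ⊗ₖ Xpow s) *
      ((if s = 0 then ketPlus (-α) else ketMinus (-α))ᴴ ⊗ₖ
        (1 : Matrix (Fin 2) (Fin 2) ℂ)) *
      CZ * (ψ ⊗ₖ ketPlus 0)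
    = (Complex.exp (((α : ℂ) / 2) * Complex.I) / (Real.sqrt 2 : ℂ)) •
        ((1 : Matrix (Fin 1) (Fin 1) ℂ) ⊗ₖ (H * Zrot α * ψ)) := by
  have h2 : ((Real.sqrt 2 : ℝ) : ℂ) ≠ 0 := by
    exact_mod_cast Real.sqrt_ne_zero'.2 (by norm_num)
  have hb0 : Complex.exp (((α:ℂ)/2) * Complex.I) ≠ 0 := Complex.exp_ne_zero _
  have ha : Complex.exp (-((α:ℂ)/2 * Complex.I))
      = (Complex.exp (((α:ℂ)/2) * Complex.I))⁻¹ := by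
    rw [← Complex.exp_neg]
  have hexp : Complex.exp (-((α:ℂ) * Complex.I))
      = (Complex.exp (((α:ℂ)/2) * Complex.I))⁻¹ * (Complex.exp (((α:ℂ)/2) * Complex.I))⁻¹ := by
    rw [← ha, ← Complex.exp_add]; ring_nf
  have hconj : (starRingEnd ℂ) ((Complex.exp (((α:ℂ)/2) * Complex.I))⁻¹)
      = Complex.exp (((α:ℂ)/2) * Complex.I) := by
    rw [← ha, ← Complex.exp_conj]
    congr 1
    have h : ((α:ℂ)/2) = ((α/2 : ℝ) : ℂ) := by push_cast; ring
    rw [h, map_neg, _root_.map_mul, Complex.conj_ofReal, Complex.conj_I]; ring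
  fin_cases s <;>
  · ext i j
    fin_cases i <;> fin_cases j <;>
    · simp [Matrix.mul_apply, Fintype.sum_prod_type, Fin.sum_univ_succ,
        X, H, Zrot, ketPlus, ketMinus, CZ, Xpow,
        Matrix.one_apply, Matrix.diagonal, Prod.ext_iff, hexp, ha, hconj,
        Matrix.vecMul, dotProduct]
      field_simp
end
end

section
/- Fix α ∈ ℝ. For each pair (s₁, s₂) ∈ {0,1}² there exists a complex number c with |c| = 1, depending only on α, s₁, s₂ (in particular c = e^{iα/2} when s₁ = s₂ = 0), such that for every vector ψ ∈ ℂ²: X^{s₂} · Z^{s₁} · (⟨b₂| ⊗ I₂) · (⟨b₁| ⊗ I₂ ⊗ I₂) · (I₂ ⊗ CZ) · (CZ ⊗ I₂) · (ψ ⊗ |+_{π/4}⟩ ⊗ |+⟩) = (c/2) · H · Z(α) · H · ψ, where b₁ = |+_0⟩ if s₁ = 0 and |-_0⟩ if s₁ = 1, b₂ = |+_θ⟩ if s₂ = 0 and |-_θ⟩ if s₂ = 1 with θ := -(-1)^{s₁}·α + π/4, and (⟨b|⊗I) denotes the partial inner product pairing the bra with the indicated tensor factor. That is, the pattern 𝔛_α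 = X₃^{s₂} Z₃^{s₁} M₂^{-(-1)^{s₁}α+π/4} M₁^0 E₂₃ E₁₂ N₂^{π/4} N₃^0 deterministically implements the unitary H Z(α) H on the input qubit, for every combination of measurement outcomes. -/
noncomputable section

open Matrix
open scoped Kronecker

/-- `Z^s`: the identity if `s = 0`, Pauli `Z` if `s = 1`. -/
def Zpow (s : Fin 2) : Matrix (Fin 2) (Fin 2) ℂ := if s = 0 then 1 else Z

/-- `I₂ ⊗ CZ` as an operator on three qubits indexed by `(Fin 2 × Fin 2) × Fin 2`. -/
def idKronCZ : Matrix ((Fin 2 × Fin 2) × Fin 2) ((Fin 2 × Fin 2) × Fin 2) ℂ :=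
  Matrix.reindex (Equiv.prodAssoc (Fin 2) (Fin 2) (Fin 2)).symm
    (Equiv.prodAssoc (Fin 2) (Fin 2) (Fin 2)).symm
    ((1 : Matrix (Fin 2) (Fin 2) ℂ) ⊗ₖ CZ)

/-!
Measuring the first qubit of `CZ (χ ⊗ |+_φ⟩)` with a bra `⟨w|` teleports `χ` to the second
qubit, transformed by `P(φ) H diag(w)`, where `P(φ) = diag(1, e^{iφ})`; for `⟨w| = ⟨±_θ|` this
is `P(φ) X^s H P(-θ) / √2` (one-bit teleportation). The pattern is two such steps, so it outputs
`X^{s₂} H P(π/4 - θ) X^{s₁} H ψ / 2`, and `θ` is chosen so that `π/4 - θ = (-1)^{s₁} α`.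
Commuting the byproducts to the front with `H Z = X H` and `P(-α) X = e^{-iα} X P(α)` leaves
`X^{s₂} Z^{s₁} X^{s₂} Z^{s₁} H P(α) H = ± H P(α) H`, and `P(α) = e^{iα/2} Z(α)`.
-/

def phaseGate (θ : ℝ) : Matrix (Fin 2) (Fin 2) ℂ := diagonal ![1, Complex.exp (θ * Complex.I)]

theorem phaseGate_zero : phaseGate 0 = 1 := by
  simp [phaseGate, ← diagonal_one]

theorem phaseGate_mul_phaseGate (a b : ℝ) : phaseGate a * phaseGate b = phaseGate (a + b) := by
  simp [phaseGate, ← Complex.exp_add, add_mul]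

theorem phaseGate_eq_smul_Zrot (α : ℝ) :
    phaseGate α = Complex.exp ((α : ℂ) / 2 * Complex.I) • Zrot α := by
  ext i j
  fin_cases i <;> fin_cases j <;> simp [phaseGate, Zrot, ← Complex.exp_add]
  ring_nf

theorem phaseGate_neg_mul_X (α : ℝ) :
    phaseGate (-α) * X = Complex.exp (-α * Complex.I) • (X * phaseGate α) := by
  ext i j
  fin_cases i <;> fin_cases j <;> simp [phaseGate, X, Matrix.vecMul_diagonal, ← Complex.exp_add]

theorem phaseGate_signed_mul_Xpow (s : Fin 2) (α : ℝ) :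
    phaseGate ((-1) ^ (s : ℕ) * α) * Xpow s =
      Complex.exp (-(s : ℕ) * α * Complex.I) • (Xpow s * phaseGate α) := by
  fin_cases s
  · simp [Xpow]
  · simpa [Xpow] using phaseGate_neg_mul_X α

theorem H_mul_Z : H * Z = X * H := by
  ext i j
  fin_cases i <;> fin_cases j <;> simp [H, X, Z]

theorem H_mul_X : H * X = Z * H := by
  ext i j
  fin_cases i <;> fin_cases j <;> simp [H, X, Z]

theorem H_mul_Zpow (s : Fin 2) : H * Zpow s = Xpow s * H := by
  fin_cases s <;> simp [Zpow, Xpow, H_mul_Z]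

theorem H_mul_Xpow (s : Fin 2) : H * Xpow s = Zpow s * H := by
  fin_cases s <;> simp [Zpow, Xpow, H_mul_X]

theorem Xpow_mul_Zpow_mul_Xpow_mul_Zpow (s t : Fin 2) :
    Xpow t * Zpow s * Xpow t * Zpow s = (-1 : ℂ) ^ ((s : ℕ) * t) • 1 := by
  fin_cases s <;> fin_cases t <;> ext i j <;> fin_cases i <;> fin_cases j <;>
    simp [Zpow, Xpow, X, Z]

theorem diagonal_conjTranspose_ite_ketPlus_ketMinus (s : Fin 2) (θ : ℝ) :
    diagonal ((if s = 0 then ketPlus θ else ketMinus θ)ᴴ 0) =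
      (Real.sqrt 2 : ℂ)⁻¹ • (Zpow s * phaseGate (-θ)) := by
  ext i j
  fin_cases s <;> fin_cases i <;> fin_cases j <;>
    simp [ketPlus, ketMinus, Zpow, Z, phaseGate, Matrix.vecMul_diagonal, ← Complex.exp_conj]

theorem kron_one_mul_CZ_mul_kron_ketPlus (w : Matrix (Fin 1) (Fin 2) ℂ)
    (χ : Matrix (Fin 2) (Fin 1) ℂ) (φ : ℝ) :
    (w ⊗ₖ (1 : Matrix (Fin 2) (Fin 2) ℂ)) * CZ * (χ ⊗ₖ ketPlus φ) =
      (1 : Matrix (Fin 1) (Fin 1) ℂ) ⊗ₖ (phaseGate φ * H * diagonal (w 0) * χ) := by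
  ext ⟨a, k⟩ ⟨b, c⟩
  fin_cases a; fin_cases b; fin_cases c
  fin_cases k <;>
    simp [Matrix.mul_apply, Fintype.sum_prod_type, Fin.sum_univ_two, CZ, phaseGate, H, ketPlus,
      Matrix.one_apply, diagonal_apply] <;> ring

/-- Two teleportation steps compose: measuring qubit 1 commutes with the entangler on qubits 2, 3. -/
theorem kron_mul_idKronCZ_mul_CZ_kron_one {u w : Matrix (Fin 1) (Fin 2) ℂ}
    {ψ v p χ η : Matrix (Fin 2) (Fin 1) ℂ}
    (hχ : (u ⊗ₖ (1 : Matrix (Fin 2) (Fin 2) ℂ)) * CZ * (ψ ⊗ₖ v) =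
      (1 : Matrix (Fin 1) (Fin 1) ℂ) ⊗ₖ χ)
    (hη : (w ⊗ₖ (1 : Matrix (Fin 2) (Fin 2) ℂ)) * CZ * (χ ⊗ₖ p) =
      (1 : Matrix (Fin 1) (Fin 1) ℂ) ⊗ₖ η) :
    (((1 : Matrix (Fin 1) (Fin 1) ℂ) ⊗ₖ w) ⊗ₖ (1 : Matrix (Fin 2) (Fin 2) ℂ)) *
        (((u ⊗ₖ (1 : Matrix (Fin 2) (Fin 2) ℂ)) ⊗ₖ (1 : Matrix (Fin 2) (Fin 2) ℂ)) *
        (idKronCZ * ((CZ ⊗ₖ (1 : Matrix (Fin 2) (Fin 2) ℂ)) * ((ψ ⊗ₖ v) ⊗ₖ p)))) =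
      (1 : Matrix (Fin 1 × Fin 1) (Fin 1 × Fin 1) ℂ) ⊗ₖ η := by
  obtain ⟨hχ₀, hχ₁⟩ : _ ∧ _ := by
    simpa [Matrix.mul_apply, Fintype.sum_prod_type, CZ, Matrix.one_apply] using
      fun j => congrFun (congrFun hχ (0, j)) (0, 0)
  obtain ⟨hη₀, hη₁⟩ : _ ∧ _ := by
    simpa [Matrix.mul_apply, Fintype.sum_prod_type, CZ, Matrix.one_apply] using
      fun k => congrFun (congrFun hη (0, k)) (0, 0)
  ext ⟨⟨a, b⟩, k⟩ ⟨⟨c, d⟩, e⟩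
  fin_cases a; fin_cases b; fin_cases c; fin_cases d; fin_cases e
  fin_cases k <;>
    simp [Matrix.mul_apply, Fintype.sum_prod_type, CZ, idKronCZ, Matrix.one_apply, ← hη₀, ← hη₁,
      ← hχ₀, ← hχ₁] <;> ring

/-- `(-1)^{s₁ s₂}` comes from `X^{s₂} Z^{s₁} X^{s₂} Z^{s₁}`, `e^{-i s₁ α}` from commuting `P(-α)`
past `X`, and `e^{iα/2}` from `P(α) = e^{iα/2} Z(α)`. -/
def patternPhase (α : ℝ) (s₁ s₂ : Fin 2) : ℂ :=
  (-1) ^ ((s₁ : ℕ) * s₂) * Complex.exp (-(s₁ : ℕ) * α * Complex.I) *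
    Complex.exp ((α : ℂ) / 2 * Complex.I)

theorem norm_patternPhase (α : ℝ) (s₁ s₂ : Fin 2) : ‖patternPhase α s₁ s₂‖ = 1 := by
  simp [patternPhase, Complex.norm_exp]

theorem patternPhase_zero_zero (α : ℝ) :
    patternPhase α 0 0 = Complex.exp ((α : ℂ) / 2 * Complex.I) := by
  simp [patternPhase]

theorem Xpow_mul_Zpow_mul_pattern_gates (α : ℝ) (s₁ s₂ : Fin 2) :
    Xpow s₂ * Zpow s₁ *
        (H * (Zpow s₂ * phaseGate (-(-(-1 : ℝ) ^ (s₁ : ℕ) * α + Real.pi / 4))) *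
          (phaseGate (Real.pi / 4) * H * Zpow s₁)) =
      patternPhase α s₁ s₂ • (H * Zrot α * H) := by
  have hθ : -(-(-1 : ℝ) ^ (s₁ : ℕ) * α + Real.pi / 4) + Real.pi / 4 = (-1) ^ (s₁ : ℕ) * α := by
    ring
  calc _ = Xpow s₂ * Zpow s₁ * (H * Zpow s₂) *
        (phaseGate (-(-(-1 : ℝ) ^ (s₁ : ℕ) * α + Real.pi / 4)) * phaseGate (Real.pi / 4)) *
        (H * Zpow s₁) := by simp only [Matrix.mul_assoc]
    _ = Xpow s₂ * Zpow s₁ * Xpow s₂ * H * (phaseGate ((-1) ^ (s₁ : ℕ) * α) * Xpow s₁) * H := by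
        rw [H_mul_Zpow, H_mul_Zpow, phaseGate_mul_phaseGate, hθ]; simp only [Matrix.mul_assoc]
    _ = Complex.exp (-(s₁ : ℕ) * α * Complex.I) •
          (Xpow s₂ * Zpow s₁ * Xpow s₂ * (H * Xpow s₁) * phaseGate α * H) := by
        rw [phaseGate_signed_mul_Xpow]
        simp only [Matrix.mul_smul, Matrix.smul_mul, Matrix.mul_assoc]
    _ = _ := by
        rw [H_mul_Xpow, ← Matrix.mul_assoc, Xpow_mul_Zpow_mul_Xpow_mul_Zpow, phaseGate_eq_smul_Zrot]
        simp only [Matrix.mul_smul, Matrix.smul_mul, smul_smul, Matrix.one_mul, Matrix.mul_assoc]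
        congr 1
        simp only [patternPhase]
        ring

/-- The pattern `𝔛_α = X₃^{s₂} Z₃^{s₁} M₂^{-(-1)^{s₁}α+π/4} M₁^0 E₂₃ E₁₂
N₂^{π/4} N₃^0` deterministically implements `H Z(α) H` on the input qubit: for
each outcome pair `(s₁, s₂)` there is a unimodular constant `c` depending only on
`α, s₁, s₂` (with `c = e^{iα/2}` for `s₁ = s₂ = 0`) such that for all `ψ`,
`X^{s₂} Z^{s₁} (⟨b₂|⊗I₂) (⟨b₁|⊗I₂⊗I₂) (I₂⊗CZ) (CZ⊗I₂) (ψ⊗|+_{π/4}⟩⊗|+⟩)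
  = (c/2) H Z(α) H ψ`,
where `b₁ = |±_0⟩` according to `s₁` and `b₂ = |±_θ⟩` according to `s₂`, with
`θ = -(-1)^{s₁}α + π/4`. -/
theorem X_pattern (α : ℝ) (s₁ s₂ : Fin 2) :
    ∃ c : ℂ, ‖c‖ = 1 ∧
      (s₁ = 0 → s₂ = 0 → c = Complex.exp (((α : ℂ) / 2) * Complex.I)) ∧
      ∀ ψ : Matrix (Fin 2) (Fin 1) ℂ,
        ((1 : Matrix (Fin 1 × Fin 1) (Fin 1 × Fin 1) ℂ) ⊗ₖ Xpow s₂) *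
          ((1 : Matrix (Fin 1 × Fin 1) (Fin 1 × Fin 1) ℂ) ⊗ₖ Zpow s₁) *
          (((1 : Matrix (Fin 1) (Fin 1) ℂ) ⊗ₖ
              (if s₂ = 0 then ketPlus (-(-1 : ℝ) ^ (s₁ : ℕ) * α + Real.pi / 4)
               else ketMinus (-(-1 : ℝ) ^ (s₁ : ℕ) * α + Real.pi / 4))ᴴ) ⊗ₖ
            (1 : Matrix (Fin 2) (Fin 2) ℂ)) *
          (((if s₁ = 0 then ketPlus 0 else ketMinus 0)ᴴ ⊗ₖ
              (1 : Matrix (Fin 2) (Fin 2) ℂ)) ⊗ₖ (1 : Matrix (Fin 2) (Fin 2) ℂ)) *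
          idKronCZ * (CZ ⊗ₖ (1 : Matrix (Fin 2) (Fin 2) ℂ)) *
          ((ψ ⊗ₖ ketPlus (Real.pi / 4)) ⊗ₖ ketPlus 0)
        = (c / 2) •
            ((1 : Matrix (Fin 1 × Fin 1) (Fin 1 × Fin 1) ℂ) ⊗ₖ
              (H * Zrot α * H * ψ)) := by
  refine ⟨patternPhase α s₁ s₂, norm_patternPhase α s₁ s₂,
    by rintro rfl rfl; exact patternPhase_zero_zero α, fun ψ => ?_⟩
  have hχ := kron_one_mul_CZ_mul_kron_ketPlus
    (if s₁ = 0 then ketPlus 0 else ketMinus 0)ᴴ ψ (Real.pi / 4)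
  have hgates := congrArg (· * ψ) (Xpow_mul_Zpow_mul_pattern_gates α s₁ s₂)
  have hsqrt : (Real.sqrt 2 : ℂ)⁻¹ * (Real.sqrt 2 : ℂ)⁻¹ = 1 / 2 := by
    rw [← mul_inv, ← Complex.ofReal_mul, Real.mul_self_sqrt zero_le_two]; norm_num
  simp only [Matrix.mul_assoc] at hgates ⊢
  rw [kron_mul_idKronCZ_mul_CZ_kron_one hχ (kron_one_mul_CZ_mul_kron_ketPlus _ _ 0),
    ← Matrix.mul_kronecker_mul, ← Matrix.mul_kronecker_mul, ← Matrix.kronecker_smul]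
  congr 1
  · simp only [Matrix.one_mul]
  rw [diagonal_conjTranspose_ite_ketPlus_ketMinus, diagonal_conjTranspose_ite_ketPlus_ketMinus,
    neg_zero, phaseGate_zero]
  simp only [Matrix.mul_one, Matrix.one_mul, Matrix.mul_smul, Matrix.smul_mul, smul_smul,
    Matrix.mul_assoc] at hgates ⊢
  rw [hgates, smul_smul, hsqrt]
  congr 1
  ring
end
end
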